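/- A graph G is a half-square of a star convex bipartite graph if and only if either (i) G has at most one connected component with at least two vertices and that component has a universal vertex, or (ii) G is obtained from a split graph by substituting vertices by cliques. -/

import Mathlib

/-- The half-square of a bipartite graph given by an incidence relation `E : X → Y → Prop`:
two distinct vertices of `X` are adjacent iff they have a common neighbor in `Y`. -/
def halfSquare {X Y : Type*} (E : X → Y → Prop) : SimpleGraph X where
  Adj u v := u ≠ v ∧ ∃ y, E u y ∧ E v y
  symm := by
    constructor
    rintro u v ⟨h, y, hu, hv⟩
    exact ⟨h.symm, y, hv, hu⟩
  loopless := by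
    constructor
    rintro u ⟨h, -⟩
    exact h rfl

/-- `C` is a maximal clique of `G`. -/
def MaximalClique {V : Type*} (G : SimpleGraph V) (C : Set V) : Prop :=
  G.IsClique C ∧ ∀ D, G.IsClique D → C ⊆ D → D = C

/-- `E : X → Y → Prop` is star convex with respect to the star on `X` centered at `x₀`:
every neighborhood `N(y)` with at least two vertices contains the center `x₀`
(equivalently, `N(y)` induces a substar of the star centered at `x₀`). -/
def IsStarConvex {X Y : Type*} (E : X → Y → Prop) (x₀ : X) : Prop :=
  ∀ y x x', E x y → E x' y → x ≠ x' → E x₀ y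

/-- A split graph: the vertex set partitions into a clique and a stable set. -/
def IsSplitGraph {A : Type*} (S : SimpleGraph A) : Prop :=
  ∃ K : Set A, S.IsClique K ∧ ∀ a ∉ K, ∀ b ∉ K, ¬ S.Adj a b

/-- `G` is obtained from `S` by substituting each vertex `a` of `S` by the (nonempty)
clique `f ⁻¹ {a}`: distinct vertices of `G` are adjacent iff they lie in the same
substituted clique or their images are adjacent in `S`. -/
def ObtainedBySubstCliques {V A : Type*} (G : SimpleGraph V) (S : SimpleGraph A) : Prop :=
  ∃ f : V → A, Function.Surjective f ∧
    ∀ u v, u ≠ v → (G.Adj u v ↔ (f u = f v ∨ S.Adj (f u) (f v)))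

/-- `G` is a half-square of a star convex bipartite graph (the star may be on either
color class). -/
def IsHalfSquareOfStarConvex {V : Type} (G : SimpleGraph V) : Prop :=
  ∃ (W : Type) (E : V → W → Prop),
    ((∃ u : V, IsStarConvex E u) ∨ (∃ w₀ : W, IsStarConvex (Function.swap E) w₀)) ∧
    halfSquare E = G

/-!
If the star lies on `V` with centre `x₀`, then `x₀` is adjacent in the half-square to every
non-isolated vertex, which gives (i). If it lies on `W` with centre `w₀`, then `N(w₀)` is a
clique and every other vertex of `V` has at most one neighbour `y`; merging these vertices
into `y` gives a split graph, and the half-square arises from it by substituting cliques.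

Conversely, the graph in (i) is the half-square of its vertex-edge incidence with the
universal vertex added to every edge, a split graph with clique `K` is the half-square of an
incidence that is star convex at a new vertex joined to `K`, and substituting cliques amounts
to pulling an incidence back along the substitution map.
-/

open Function

lemma halfSquare_adj {X Y : Type*} {E : X → Y → Prop} {u v : X} :
    (halfSquare E).Adj u v ↔ u ≠ v ∧ ∃ y, E u y ∧ E v y := Iff.rfl

section StarOnLeft

variable {X Y : Type*} {E : X → Y → Prop} {x₀ : X}

lemma IsStarConvex.halfSquare_adj_center (h : IsStarConvex E x₀) {v w : X}
    (hvw : (halfSquare E).Adj v w) (hv : v ≠ x₀) : (halfSquare E).Adj x₀ v := by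
  obtain ⟨hne, y, hvy, hwy⟩ := hvw
  exact ⟨hv.symm, y, h y v w hvy hwy hne, hvy⟩

lemma IsStarConvex.reachable_center (h : IsStarConvex E x₀) {v w : X}
    (hvw : (halfSquare E).Adj v w) : (halfSquare E).Reachable v x₀ := by
  obtain rfl | hv := eq_or_ne v x₀
  · rfl
  · exact (h.halfSquare_adj_center hvw hv).reachable.symm

end StarOnLeft

lemma IsStarConvex.swap_comp {V A W : Type*} {E : A → W → Prop} {w₀ : W}
    (h : IsStarConvex (swap E) w₀) (f : V → A) :
    IsStarConvex (swap fun v y => E (f v) y) w₀ :=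
  fun v y y' => h (f v) y y'

lemma halfSquare_comp_adj {V A W : Type*} {E : A → W → Prop} {f : V → A}
    (hf : ∀ u v, u ≠ v → f u = f v → ∃ y, E (f u) y) {u v : V} (huv : u ≠ v) :
    (halfSquare fun v y => E (f v) y).Adj u v ↔ f u = f v ∨ (halfSquare E).Adj (f u) (f v) := by
  simp only [halfSquare_adj]
  constructor
  · rintro ⟨-, y, hu, hv⟩
    by_cases hfuv : f u = f v
    · exact .inl hfuv
    · exact .inr ⟨hfuv, y, hu, hv⟩
  · rintro (hfuv | ⟨-, y, hu, hv⟩)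
    · obtain ⟨y, hy⟩ := hf u v huv hfuv
      exact ⟨huv, y, hy, hfuv ▸ hy⟩
    · exact ⟨huv, y, hu, hv⟩

lemma IsSplitGraph.induce {A : Type*} {S : SimpleGraph A} (hS : IsSplitGraph S) (s : Set A) :
    IsSplitGraph (S.induce s) := by
  obtain ⟨K, hK, hstable⟩ := hS
  exact ⟨{a | a.1 ∈ K}, fun a ha b hb hab => hK ha hb (Subtype.coe_ne_coe.2 hab),
    fun a ha b hb => hstable a ha b hb⟩

lemma obtainedBySubstCliques_induce_range {V A : Type*} {G : SimpleGraph V}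
    {S : SimpleGraph A} {f : V → A}
    (hG : ∀ u v, u ≠ v → (G.Adj u v ↔ f u = f v ∨ S.Adj (f u) (f v))) :
    ObtainedBySubstCliques G (S.induce (Set.range f)) :=
  ⟨Set.rangeFactorization f, Set.rangeFactorization_surjective, fun u v huv => by
    simpa [Set.rangeFactorization, Subtype.ext_iff] using hG u v huv⟩

section StarOnRight

variable {V W : Type*} (E : V → W → Prop) (w₀ : W)

/-- Each vertex outside `N(w₀)` with a neighbour `y` is to be merged into the pendant
vertex `Sum.inr y` (see `starContractionMap`). -/
def starContraction : V ⊕ W → W → Prop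
  | .inl v, y => E v w₀ ∧ E v y
  | .inr z, y => z = y

lemma isSplitGraph_halfSquare_starContraction :
    IsSplitGraph (halfSquare (starContraction E w₀)) := by
  refine ⟨{a | starContraction E w₀ a w₀}, fun a ha b hb hab => ⟨hab, w₀, ha, hb⟩, ?_⟩
  rintro (a | a) ha (b | b) hb ⟨hab, y, hay, hby⟩
  · exact ha ⟨hay.1, hay.1⟩
  · exact ha ⟨hay.1, hay.1⟩
  · exact hb ⟨hby.1, hby.1⟩
  · exact hab (congrArg Sum.inr (hay.trans hby.symm))

open Classical in
noncomputable def starContractionMap (v : V) : V ⊕ W :=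
  if h : ∃ y, ¬E v w₀ ∧ E v y then .inr h.choose else .inl v

variable {E w₀}

lemma starContractionMap_eq_inl {v u : V} (h : starContractionMap E w₀ v = .inl u) :
    v = u := by
  unfold starContractionMap at h
  split_ifs at h
  exact Sum.inl_injective h

lemma IsStarConvex.starContraction_starContractionMap_iff
    (h : IsStarConvex (swap E) w₀) {v : V} {y : W} :
    starContraction E w₀ (starContractionMap E w₀ v) y ↔ E v y := by
  unfold starContractionMap
  split_ifs with hv
  · obtain ⟨hvw₀, hvy₀⟩ := hv.choose_spec
    refine ⟨fun hy => hy ▸ hvy₀, fun hvy => ?_⟩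
    by_contra hne
    exact hvw₀ (h v _ _ hvy₀ hvy hne)
  · simp only [not_exists, not_and] at hv
    exact ⟨And.right, fun hvy => ⟨by_contra fun hvw₀ => hv y hvw₀ hvy, hvy⟩⟩

end StarOnRight

theorem IsStarConvex.exists_isSplitGraph_obtainedBySubstCliques {V W : Type}
    {E : V → W → Prop} {w₀ : W} (h : IsStarConvex (swap E) w₀) :
    ∃ (A : Type) (S : SimpleGraph A), IsSplitGraph S ∧
      ObtainedBySubstCliques (halfSquare E) S := by
  set f := starContractionMap E w₀
  have hE : halfSquare E = halfSquare fun v y => starContraction E w₀ (f v) y :=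
    congrArg halfSquare (funext₂ fun _ _ => propext h.starContraction_starContractionMap_iff.symm)
  have hfibre : ∀ u v, u ≠ v → f u = f v → ∃ y, starContraction E w₀ (f u) y := by
    intro u v huv hfuv
    rcases hfu : f u with x | z
    · exact absurd ((starContractionMap_eq_inl hfu).trans
        (starContractionMap_eq_inl (hfuv ▸ hfu)).symm) huv
    · exact ⟨z, rfl⟩
  refine ⟨Set.range f, _, (isSplitGraph_halfSquare_starContraction E w₀).induce _,
    obtainedBySubstCliques_induce_range fun u v huv => ?_⟩
  rw [hE]
  exact halfSquare_comp_adj hfibre huv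

section SplitGraph

variable {A : Type*} (S : SimpleGraph A) (K : Set A)

/-- Realises a split graph with clique `K` as a half-square (`halfSquare_splitIncidence`):
the new vertex `none` is the centre of the star. -/
def splitIncidence (a : A) : Option A → Prop
  | none => a ∈ K
  | some b => a = b ∨ (a ∈ K ∧ S.Adj a b)

lemma isStarConvex_swap_splitIncidence : IsStarConvex (swap (splitIncidence S K)) none := by
  rintro a (_ | b) (_ | b') ha hb hne
  · exact ha
  · exact ha
  · exact hb
  · rcases ha with rfl | ha
    · rcases hb with rfl | hb
      · exact absurd rfl hne
      · exact hb.1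
    · exact ha.1

variable {S K}

lemma halfSquare_splitIncidence (hK : S.IsClique K) (hstable : ∀ a ∉ K, ∀ b ∉ K, ¬S.Adj a b) :
    halfSquare (splitIncidence S K) = S := by
  ext a b
  rw [halfSquare_adj]
  constructor
  · rintro ⟨hab, _ | c, ha, hb⟩
    · exact hK ha hb hab
    · rcases ha with rfl | ⟨haK, ha⟩ <;> rcases hb with rfl | ⟨hbK, hb⟩
      · exact absurd rfl hab
      · exact hb.symm
      · exact ha
      · exact hK haK hbK hab
  · intro hab
    refine ⟨hab.ne, ?_⟩
    by_cases ha : a ∈ K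
    · exact ⟨some b, .inr ⟨ha, hab⟩, .inl rfl⟩
    · have hb : b ∈ K := by_contra fun hb => hstable a ha b hb hab
      exact ⟨some a, .inl rfl, .inr ⟨hb, hab.symm⟩⟩

end SplitGraph

theorem ObtainedBySubstCliques.isHalfSquareOfStarConvex {V A : Type} {G : SimpleGraph V}
    {S : SimpleGraph A} (hGS : ObtainedBySubstCliques G S) (hS : IsSplitGraph S) :
    IsHalfSquareOfStarConvex G := by
  obtain ⟨K, hK, hstable⟩ := hS
  obtain ⟨f, -, hf⟩ := hGS
  refine ⟨Option A, fun v o => splitIncidence S K (f v) o,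
    .inr ⟨none, (isStarConvex_swap_splitIncidence S K).swap_comp f⟩, ?_⟩
  ext u v
  obtain rfl | huv := eq_or_ne u v
  · simp
  rw [halfSquare_comp_adj (fun u _ _ _ => ⟨some (f u), .inl rfl⟩) huv,
    halfSquare_splitIncidence hK hstable, hf u v huv]

theorem isHalfSquareOfStarConvex_of_universal {V : Type} {G : SimpleGraph V} {u₀ : V}
    (hu₀ : ∀ v, v ≠ u₀ → (∃ w, G.Adj v w) → G.Adj u₀ v) :
    IsHalfSquareOfStarConvex G := by
  have hcenter : ∀ e ∈ G.edgeSet, ∀ v ∈ e, v ≠ u₀ → G.Adj u₀ v := by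
    intro e he v hv hvu₀
    obtain ⟨w, rfl⟩ := Sym2.mem_iff_exists.1 hv
    exact hu₀ v hvu₀ ⟨w, he⟩
  refine ⟨G.edgeSet, fun v e => v ∈ (e : Sym2 V) ∨ v = u₀,
    .inl ⟨u₀, fun _ _ _ _ _ _ => .inr rfl⟩, ?_⟩
  ext a b
  rw [halfSquare_adj]
  constructor
  · rintro ⟨hab, e, ha | rfl, hb | rfl⟩
    · simpa [(Sym2.mem_and_mem_iff hab).1 ⟨ha, hb⟩] using e.2
    · exact (hcenter e e.2 a ha hab).symm
    · exact hcenter e e.2 b hb hab.symm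
    · exact absurd rfl hab
  · intro hab
    exact ⟨hab.ne, ⟨s(a, b), hab⟩, .inl (Sym2.mem_mk_left a b), .inl (Sym2.mem_mk_right a b)⟩

theorem isHalfSquareOfStarConvex_of_forall_not_adj {V : Type} {G : SimpleGraph V}
    (hG : ∀ u v, ¬G.Adj u v) : IsHalfSquareOfStarConvex G :=
  ⟨Unit, fun _ _ => False, .inr ⟨(), fun _ _ _ h => h.elim⟩, by
    ext u v
    exact iff_of_false (fun ⟨_, _, h, _⟩ => h) (hG u v)⟩

/-- A graph is a half-square of a star convex bipartite graph iff either (i) it has at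
most one connected component with at least two vertices and that component has a
universal vertex, or (ii) it is obtained from a split graph by substituting vertices
by cliques. -/
theorem stmt_11 {V : Type} (G : SimpleGraph V) :
    IsHalfSquareOfStarConvex G ↔
    (((∀ u v u' v', G.Adj u u' → G.Adj v v' → G.Reachable u v) ∧
        ((∃ u v, G.Adj u v) → ∃ u, ∀ v, v ≠ u → (∃ w, G.Adj v w) → G.Adj u v)) ∨
      (∃ (A : Type) (S : SimpleGraph A), IsSplitGraph S ∧ ObtainedBySubstCliques G S)) := by
  constructor
  · rintro ⟨W, E, ⟨x₀, hx₀⟩ | ⟨w₀, hw₀⟩, rfl⟩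
    · refine .inl ⟨fun u v u' v' hu hv => ?_, fun _ => ⟨x₀, fun v hv ⟨w, hvw⟩ => ?_⟩⟩
      · exact (hx₀.reachable_center hu).trans (hx₀.reachable_center hv).symm
      · exact hx₀.halfSquare_adj_center hvw hv
    · exact .inr hw₀.exists_isSplitGraph_obtainedBySubstCliques
  · rintro (⟨-, huniv⟩ | ⟨A, S, hS, hGS⟩)
    · by_cases hedge : ∃ u v, G.Adj u v
      · obtain ⟨u₀, hu₀⟩ := huniv hedge
        exact isHalfSquareOfStarConvex_of_universal hu₀
      · push Not at hedge
        exact isHalfSquareOfStarConvex_of_forall_not_adj hedge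
    · exact hGS.isHalfSquareOfStarConvex hS
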